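/- Let X be the 2^k × (d+1) design matrix of a full 2^k factorial main-effects model (k ≥ 3, d(d+1) ≤ 2^{k+1} − 4, rows indexed by {−1,1}^k with columns 1, x_1,…,x_k in the main-effects case). For any (d+1)-element index set I of rows, there exists another (d+1)-element index set I' with det(X[I])² = det(X[I'])² and I ∩ I' = ∅. -/

import Mathlib

open Matrix

/-- Squared determinant of the square submatrix of `X` formed by the rows in `J`
(defined to be `0` if `J` does not have exactly `m` elements). -/
noncomputable def dsq {ι : Type*} [DecidableEq ι] {m : ℕ}
    (X : Matrix ι (Fin m) ℝ) (J : Finset ι) : ℝ :=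
  if h : J.card = m then
    (X.submatrix (fun t : Fin m => (J.equivFin.symm (Fin.cast h.symm t) : ι)) id).det ^ 2
  else 0

/-- For the `2^k` factorial design matrix (rows indexed by sign vectors, columns given by
products of coordinates, with a constant column), if `k ≥ 3` and `d(d+1) ≤ 2^{k+1} - 4`,
then any `(d+1)`-element row index set `I` admits a disjoint `(d+1)`-element row index set
`I'` with the same squared subdeterminant. -/
theorem stmt10 (k d : ℕ) (hk : 3 ≤ k) (hd : d * (d + 1) ≤ 2 ^ (k + 1) - 4)
    (T : Fin (d + 1) → Finset (Fin k)) (hT0 : T 0 = ∅)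
    (X : Matrix (Fin k → Bool) (Fin (d + 1)) ℝ)
    (hX : ∀ σ j, X σ j = ∏ t ∈ T j, (if σ t then (1 : ℝ) else -1))
    (I : Finset (Fin k → Bool)) (hI : I.card = d + 1) :
    ∃ I' : Finset (Fin k → Bool),
      I'.card = d + 1 ∧ Disjoint I I' ∧ dsq X I = dsq X I' := by
  classical
  have hs : ∀ a b : Bool, (if (a == b) then (1:ℝ) else -1)
      = (if a then (1:ℝ) else -1) * (if b then (1:ℝ) else -1) := by
    intro a b; cases a <;> cases b <;> norm_num
  set e := Fintype.equivFin (Fin k → Bool) with he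
  set g : (Fin k → Bool) × (Fin k → Bool) → (Fin k → Bool) :=
    fun p t => p.1 t == p.2 t with hg
  set D : Finset ((Fin k → Bool) × (Fin k → Bool)) :=
    I.offDiag.filter (fun p => (e p.1 : ℕ) < e p.2) with hD
  set Bad : Finset (Fin k → Bool) := insert (fun _ => true) (D.image g) with hBad
  -- cardinality of D
  have hDcard : 2 * D.card ≤ d * (d + 1) := by
    have hswap : (D.image Prod.swap).card = D.card :=
      Finset.card_image_of_injective _ Prod.swap_injective
    have hdisj : Disjoint D (D.image Prod.swap) := by
      rw [Finset.disjoint_left]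
      rintro p hp hp'
      obtain ⟨q, hq, rfl⟩ := Finset.mem_image.1 hp'
      have h1 := (Finset.mem_filter.1 hp).2
      have h2 := (Finset.mem_filter.1 hq).2
      simp only [Prod.fst_swap, Prod.snd_swap] at h1
      omega
    have hsub : D ∪ D.image Prod.swap ⊆ I.offDiag := by
      intro p hp
      rcases Finset.mem_union.1 hp with h | h
      · exact Finset.filter_subset _ _ h
      · obtain ⟨q, hq, rfl⟩ := Finset.mem_image.1 h
        have hq' := Finset.mem_offDiag.1 (Finset.filter_subset _ _ hq)
        exact Finset.mem_offDiag.2 ⟨hq'.2.1, hq'.1, fun hh => hq'.2.2 hh.symm⟩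
    have hle := Finset.card_le_card hsub
    rw [Finset.card_union_of_disjoint hdisj, hswap, Finset.offDiag_card, hI] at hle
    have hxx : (d+1)*(d+1) = d*(d+1) + (d+1) := by ring
    omega
  -- find a good flip vector v
  have hpow : 8 ≤ 2 ^ k := by
    calc (8:ℕ) = 2 ^ 3 := rfl
    _ ≤ 2 ^ k := Nat.pow_le_pow_right (by norm_num) hk
  have hpow1 : 2 ^ (k+1) = 2 * 2 ^ k := by ring
  have hBadcard : Bad.card < 2 ^ k := by
    have h1 : Bad.card ≤ (D.image g).card + 1 := Finset.card_insert_le _ _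
    have h2 : (D.image g).card ≤ D.card := Finset.card_image_le
    omega
  have hex : ∃ v, v ∉ Bad := by
    by_contra h
    push_neg at h
    have : Bad = Finset.univ := Finset.eq_univ_iff_forall.2 h
    rw [this, Finset.card_univ, Fintype.card_fun, Fintype.card_bool, Fintype.card_fin]
      at hBadcard
    exact lt_irrefl _ hBadcard
  obtain ⟨v, hv⟩ := hex
  -- the flip map
  set f : (Fin k → Bool) → (Fin k → Bool) := fun σ t => σ t == v t with hf
  have hff : ∀ σ, f (f σ) = σ := by
    intro σ; funext t
    show ((σ t == v t) == v t) = σ t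
    cases σ t <;> cases v t <;> rfl
  have finj : Function.Injective f := by
    intro a b h
    have := congrArg f h
    rwa [hff, hff] at this
  have hI' : (I.image f).card = d + 1 := by
    rw [Finset.card_image_of_injective _ finj, hI]
  -- disjointness
  have hdisjI : Disjoint I (I.image f) := by
    rw [Finset.disjoint_left]
    intro τ hτ hτ'
    obtain ⟨σ, hσ, hστ⟩ := Finset.mem_image.1 hτ'
    have hveq : v = fun t => σ t == τ t := by
      funext t
      have ht : τ t = (σ t == v t) := by rw [← hστ]
      rw [ht]
      cases σ t <;> cases v t <;> rfl
    by_cases hst : σ = τ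
    · apply hv
      rw [hBad]
      have hvt : v = fun _ => true := by
        rw [hveq, hst]; funext t; cases τ t <;> rfl
      rw [hvt]
      exact Finset.mem_insert_self _ _
    · apply hv
      apply Finset.mem_insert_of_mem
      have hne : (e σ : ℕ) ≠ (e τ : ℕ) := by
        intro hh
        exact hst (e.injective (Fin.ext hh))
      rcases lt_or_gt_of_ne hne with hlt | hgt
      · refine Finset.mem_image.2 ⟨(σ, τ), ?_, ?_⟩
        · exact Finset.mem_filter.2 ⟨Finset.mem_offDiag.2 ⟨hσ, hτ, hst⟩, hlt⟩
        · rw [hveq]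
      · refine Finset.mem_image.2 ⟨(τ, σ), ?_, ?_⟩
        · exact Finset.mem_filter.2 ⟨Finset.mem_offDiag.2 ⟨hτ, hσ, fun hh => hst hh.symm⟩, hgt⟩
        · rw [hveq]; funext t; show (τ t == σ t) = (σ t == τ t)
          cases σ t <;> cases τ t <;> rfl
  refine ⟨I.image f, hI', hdisjI, ?_⟩
  -- determinant part
  unfold dsq
  rw [dif_pos hI, dif_pos hI']
  set r : Fin (d+1) → (Fin k → Bool) :=
    fun t => (I.equivFin.symm (Fin.cast hI.symm t) : Fin k → Bool) with hr
  set r' : Fin (d+1) → (Fin k → Bool) :=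
    fun t => ((I.image f).equivFin.symm (Fin.cast hI'.symm t) : Fin k → Bool) with hr'
  have hr'mem : ∀ t, f (r' t) ∈ I := by
    intro t
    have h1 : r' t ∈ I.image f := ((I.image f).equivFin.symm (Fin.cast hI'.symm t)).2
    obtain ⟨σ, hσ, hστ⟩ := Finset.mem_image.1 h1
    rw [← hστ, hff]
    exact hσ
  set π : Fin (d+1) → Fin (d+1) :=
    fun t => Fin.cast hI (I.equivFin ⟨f (r' t), hr'mem t⟩) with hπ
  have hrπ : ∀ t, r (π t) = f (r' t) := by
    intro t
    simp [hr, hπ, Fin.cast]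
  have hr'inj : Function.Injective r' := by
    intro a b h
    have h1 : ((I.image f).equivFin.symm (Fin.cast hI'.symm a))
        = ((I.image f).equivFin.symm (Fin.cast hI'.symm b)) := Subtype.ext h
    have h2 := (I.image f).equivFin.symm.injective h1
    exact Fin.cast_injective _ h2
  have hπinj : Function.Injective π := by
    intro a b h
    have h1 : r (π a) = r (π b) := by rw [h]
    rw [hrπ, hrπ] at h1
    exact hr'inj (finj h1)
  set πe : Equiv.Perm (Fin (d+1)) :=
    Equiv.ofBijective π (Finite.injective_iff_bijective.mp hπinj) with hπe
  set c : Fin (d+1) → ℝ := fun j => ∏ t ∈ T j, (if v t then (1:ℝ) else -1) with hc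
  have key : ∀ σ j, X (f σ) j = c j * X σ j := by
    intro σ j
    rw [hX, hX, hc]
    have : ∀ t : Fin k, (if (f σ) t then (1:ℝ) else -1)
        = (if σ t then (1:ℝ) else -1) * (if v t then (1:ℝ) else -1) := by
      intro t; exact hs (σ t) (v t)
    rw [Finset.prod_congr rfl (fun t _ => this t), Finset.prod_mul_distrib]
    ring
  set M : Matrix (Fin (d+1)) (Fin (d+1)) ℝ := X.submatrix r id with hM
  set N : Matrix (Fin (d+1)) (Fin (d+1)) ℝ := X.submatrix r' id with hN
  have hMM : M.submatrix πe id = Matrix.of (fun t j => c j * N t j) := by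
    ext t j
    show M (πe t) j = c j * N t j
    have hpe : πe t = π t := rfl
    rw [hpe]
    show X (r (π t)) j = c j * X (r' t) j
    rw [hrπ t, key]
  have hdet1 : (M.submatrix πe id).det = Equiv.Perm.sign πe * M.det :=
    Matrix.det_permute πe M
  have hdet2 : (Matrix.of (fun t j => c j * N t j)).det = (∏ j, c j) * N.det :=
    Matrix.det_mul_row c N
  have heq : (Equiv.Perm.sign πe : ℝ) * M.det = (∏ j, c j) * N.det := by
    rw [← hdet1, hMM, hdet2]
  have hsign2 : ((Equiv.Perm.sign πe : ℤ) : ℝ) ^ 2 = 1 := by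
    rcases Int.units_eq_one_or (Equiv.Perm.sign πe) with h | h <;> rw [h] <;> norm_num
  have hc2 : (∏ j, c j) ^ 2 = 1 := by
    rw [← Finset.prod_pow]
    apply Finset.prod_eq_one
    intro j _
    rw [hc, ← Finset.prod_pow]
    apply Finset.prod_eq_one
    intro t _
    cases v t <;> norm_num
  have := congrArg (· ^ 2) heq
  simp only [mul_pow] at this
  rw [hc2, one_mul] at this
  rw [show ((Equiv.Perm.sign πe : ℝ)) = ((Equiv.Perm.sign πe : ℤ) : ℝ) from by push_cast; ring] at this
  rw [hsign2, one_mul] at this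
  exact this
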